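/- Let c, β ≥ 0, α > 2, N ∈ ℕ, and set ε_{jk} = c e^{-β|j-k|} / (⟨j⟩⟨k⟩ (N+1)² ⟨j-k⟩^{α-1}) for integers j,k with |j|,|k| ≤ N, where ⟨k⟩ = |k|+1. Then for all sufficiently large N, ∑_{l=-N}^{N} ε_{jl} ε_{lk} ≤ (1/2) ε_{jk} for all j,k ∈ {-N,…,N}. -/
import Mathlib


/-- ⟨k⟩ = |k| + 1 -/
noncomputable def br (k : ℤ) : ℝ := |(k : ℝ)| + 1

/-- ε_{jk} = c e^{-β|j-k|} / (⟨j⟩⟨k⟩(N+1)²⟨j-k⟩^{α-1}) -/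
noncomputable def eps (c β α : ℝ) (N : ℕ) (j k : ℤ) : ℝ :=
  c * Real.exp (-β * |((j - k : ℤ) : ℝ)|) /
    (br j * br k * ((N : ℝ) + 1) ^ 2 * br (j - k) ^ (α - 1))

lemma one_le_br (k : ℤ) : 1 ≤ br k := by
  unfold br; have := abs_nonneg ((k : ℤ) : ℝ); linarith

lemma br_pos (k : ℤ) : 0 < br k := lt_of_lt_of_le one_pos (one_le_br k)

lemma br_mul (a b : ℤ) : br (a + b) ≤ br a * br b := by
  unfold br
  have h1 : |((a + b : ℤ) : ℝ)| ≤ |(a : ℝ)| + |(b : ℝ)| := by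
    push_cast; exact abs_add_le _ _
  nlinarith [abs_nonneg ((a : ℤ) : ℝ), abs_nonneg ((b : ℤ) : ℝ)]

lemma eps_nonneg (c β α : ℝ) (hc : 0 < c) (N : ℕ) (j k : ℤ) :
    0 ≤ eps c β α N j k := by
  unfold eps
  apply div_nonneg (mul_nonneg hc.le (Real.exp_nonneg _))
  have h1 := (br_pos j).le
  have h2 := (br_pos k).le
  have h3 := (Real.rpow_pos_of_pos (br_pos (j - k)) (α - 1)).le
  positivity

lemma term_bound (c β α : ℝ) (hc : 0 < c) (hβ : 0 ≤ β) (hα : 2 < α)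
    (N : ℕ) (j k l : ℤ) :
    eps c β α N j l * eps c β α N l k ≤ c / ((N : ℝ) + 1) ^ 2 * eps c β α N j k := by
  set n2 : ℝ := ((N : ℝ) + 1) ^ 2 with hn2
  have hn2pos : 0 < n2 := by positivity
  set E1 := Real.exp (-β * |((j - l : ℤ) : ℝ)|)
  set E2 := Real.exp (-β * |((l - k : ℤ) : ℝ)|)
  set E := Real.exp (-β * |((j - k : ℤ) : ℝ)|)
  set B1 := br (j - l) ^ (α - 1) with hB1
  set B2 := br (l - k) ^ (α - 1) with hB2
  set B := br (j - k) ^ (α - 1) with hB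
  have hB1pos : 0 < B1 := Real.rpow_pos_of_pos (br_pos _) _
  have hB2pos : 0 < B2 := Real.rpow_pos_of_pos (br_pos _) _
  have hBpos : 0 < B := Real.rpow_pos_of_pos (br_pos _) _
  have hEq1 : eps c β α N j l * eps c β α N l k
      = (c ^ 2 * (E1 * E2)) / ((br j * br k * n2 ^ 2) * (br l ^ 2 * (B1 * B2))) := by
    simp only [eps]
    rw [div_mul_div_comm]
    congr 1 <;> ring
  have hEq2 : c / n2 * eps c β α N j k
      = (c ^ 2 * E) / ((br j * br k * n2 ^ 2) * B) := by
    simp only [eps]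
    rw [div_mul_div_comm]
    congr 1 <;> ring
  rw [hEq1, hEq2]
  apply div_le_div₀ (by positivity)
  · -- numerator
    have htr : |((j - k : ℤ) : ℝ)| ≤ |((j - l : ℤ) : ℝ)| + |((l - k : ℤ) : ℝ)| := by
      push_cast; exact abs_sub_le _ _ _
    have hE : E1 * E2 ≤ E := by
      rw [← Real.exp_add]
      apply Real.exp_le_exp.2
      nlinarith [mul_le_mul_of_nonneg_left htr hβ]
    exact mul_le_mul_of_nonneg_left hE (sq_nonneg c)
  · -- positivity of small denominator
    exact mul_pos (mul_pos (mul_pos (br_pos j) (br_pos k)) (pow_pos hn2pos 2)) hBpos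
  · -- denominator inequality
    have hBB : B ≤ B1 * B2 := by
      have h1 : br (j - k) ≤ br (j - l) * br (l - k) := by
        have := br_mul (j - l) (l - k)
        simpa using this
      calc B ≤ (br (j - l) * br (l - k)) ^ (α - 1) := by
              apply Real.rpow_le_rpow (br_pos _).le h1 (by linarith)
        _ = B1 * B2 := Real.mul_rpow (br_pos _).le (br_pos _).le
    have hbl : 1 ≤ br l ^ 2 := by nlinarith [one_le_br l]
    have hd : B ≤ br l ^ 2 * (B1 * B2) := by nlinarith [hB1pos, hB2pos, hBpos]
    exact mul_le_mul_of_nonneg_left hd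
      (mul_pos (mul_pos (br_pos j) (br_pos k)) (pow_pos hn2pos 2)).le

theorem eps_contraction (c β α : ℝ) (hc : 0 < c) (hβ : 0 ≤ β) (hα : 2 < α) :
    ∃ N₀ : ℕ, ∀ N : ℕ, N₀ ≤ N → ∀ j k : ℤ, |j| ≤ (N : ℤ) → |k| ≤ (N : ℤ) →
      ∑ l ∈ Finset.Icc (-(N : ℤ)) (N : ℤ), eps c β α N j l * eps c β α N l k
        ≤ (1 / 2) * eps c β α N j k := by
  refine ⟨⌈4 * c⌉₊, fun N hN j k hj hk => ?_⟩
  have hNc : 4 * c ≤ (N : ℝ) := le_trans (Nat.le_ceil _) (by exact_mod_cast hN)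
  have hcard : (Finset.Icc (-(N : ℤ)) (N : ℤ)).card = 2 * N + 1 := by
    rw [Int.card_Icc]
    omega
  have hsum : ∑ l ∈ Finset.Icc (-(N : ℤ)) (N : ℤ), eps c β α N j l * eps c β α N l k
      ≤ (2 * N + 1 : ℕ) • (c / ((N : ℝ) + 1) ^ 2 * eps c β α N j k) := by
    rw [← hcard]
    exact Finset.sum_le_card_nsmul _ _ _ (fun l _ => term_bound c β α hc hβ hα N j k l)
  refine le_trans hsum ?_
  rw [nsmul_eq_mul]
  have hε := eps_nonneg c β α hc N j k
  have hfac : ((2 * N + 1 : ℕ) : ℝ) * (c / ((N : ℝ) + 1) ^ 2) ≤ 1 / 2 := by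
    push_cast
    have hN0 : (0 : ℝ) ≤ (N : ℝ) := Nat.cast_nonneg N
    have h2 : (2 * (N : ℝ) + 1) * (c / ((N : ℝ) + 1) ^ 2)
        = ((2 * (N : ℝ) + 1) * c) / ((N : ℝ) + 1) ^ 2 := by ring
    rw [h2, div_le_div_iff₀ (by positivity) (by norm_num)]
    nlinarith [mul_le_mul_of_nonneg_left hNc (show (0:ℝ) ≤ (N:ℝ) + 1 by linarith)]
  calc ((2 * N + 1 : ℕ) : ℝ) * (c / ((N : ℝ) + 1) ^ 2 * eps c β α N j k)
      = (((2 * N + 1 : ℕ) : ℝ) * (c / ((N : ℝ) + 1) ^ 2)) * eps c β α N j k := by ring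
    _ ≤ (1 / 2) * eps c β α N j k := mul_le_mul_of_nonneg_right hfac hε
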